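/- arXiv:1704.03678 — 2 statements merged into one kernel-verified Lean document; each statement's English description precedes it below -/
import Mathlib

section
/- With A_1^{2n} embedded in D_{2n} via the generators e_i ± e_{n+i}, the image of the quotient (D_{2n} + [i])/A_1^{2n} in the discriminant group (A_1^{2n})^*/A_1^{2n} ≅ 𝔽_2^{2n} equals the coset 𝒟_{2n} + [i] for each i ∈ {0,1,2,3}, where the codewords [0] = (0^{2n}), [1] = (1^n 0^n), [2] = (0^{n-1} 1 0^{n-1} 1), [3] = (1^{n-1} 0^n 1). -/
/-- The standard dot product on `ℝ^m`. -/
def dot {m : ℕ} (x y : Fin m → ℝ) : ℝ := ∑ i, x i * y i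

/-- The lattice `D_m ⊂ ℝ^m`: integer vectors with even coordinate sum. -/
def Dset (m : ℕ) : Set (Fin m → ℝ) :=
  {x | (∀ i, ∃ k : ℤ, x i = (k : ℝ)) ∧ ∃ k : ℤ, (∑ i, x i) = 2 * (k : ℝ)}

/-- The glue vectors `[0] = 0`, `[1] = (1/2,…,1/2)`, `[2] = (0,…,0,1)`,
`[3] = (1/2,…,1/2,-1/2)` for the lattice `D_m`. -/
noncomputable def glue (m : ℕ) : Fin 4 → (Fin m → ℝ) :=
  ![(fun _ => 0),
    (fun _ => 1/2),
    (fun j => if (j : ℕ) = m - 1 then 1 else 0),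
    (fun j => if (j : ℕ) = m - 1 then -(1/2) else 1/2)]

/-- The weight of a binary word: its number of nonzero entries. -/
def wt {m : ℕ} (C : Fin m → ZMod 2) : ℕ :=
  (Finset.univ.filter fun i => C i ≠ 0).card

/-- The binary code `𝒟_{2n} ⊂ 𝔽_2^{2n}`. -/
def Dcode (n : ℕ) : Set (Fin (n + n) → ZMod 2) :=
  {C | (∀ i : Fin n, C (Fin.castAdd n i) = C (Fin.natAdd n i)) ∧ wt C % 4 = 0}

/-- The glue codewords `[0] = (0^{2n})`, `[1] = (1^n 0^n)`, `[2] = (0^{n-1} 1 0^{n-1} 1)`,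
`[3] = (1^{n-1} 0^n 1)`. -/
def glueCode (n : ℕ) : Fin 4 → (Fin (n + n) → ZMod 2) :=
  ![(fun _ => 0),
    (fun j => if (j : ℕ) < n then 1 else 0),
    (fun j => if (j : ℕ) = n - 1 ∨ (j : ℕ) = n + n - 1 then 1 else 0),
    (fun j => if ((j : ℕ) < n ∧ (j : ℕ) ≠ n - 1) ∨ (j : ℕ) = n + n - 1 then 1 else 0)]

/-- The generating family `e_i + e_{n+i}` (first `n`) and `e_i - e_{n+i}` (last `n`)
of the copy of `A_1^{2n}` inside `D_{2n} ⊂ ℝ^{2n}`. -/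
noncomputable def A1gen (n : ℕ) : Fin (n + n) → (Fin (n + n) → ℝ) :=
  Fin.append
    (fun i : Fin n =>
      Pi.single (Fin.castAdd n i) (1 : ℝ) + Pi.single (Fin.natAdd n i) 1)
    (fun i : Fin n =>
      Pi.single (Fin.castAdd n i) (1 : ℝ) - Pi.single (Fin.natAdd n i) 1)

/-! Pairing an integer vector `Y` with `e_k ± e_{n+k}` gives the word `(p, p)` with
`p_k = Y_k + Y_{n+k} mod 2`. Its weight is `2 wt p`, and `wt p ≡ ∑ p ≡ ∑ Y (mod 2)`, so `D_{2n}`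
(even `∑ Y`) is sent exactly onto the doubled words of weight divisible by 4, i.e. onto `𝒟_{2n}`.
The pairing is additive and sends the glue vector `[i]` to the glue codeword `[i]`, which moves
the statement from `D_{2n}` to each of its cosets. -/

open Matrix

lemma dot_eq_dotProduct {m : ℕ} (x y : Fin m → ℝ) : dot x y = x ⬝ᵥ y := rfl

lemma dot_A1gen_castAdd {n : ℕ} (x : Fin (n + n) → ℝ) (k : Fin n) :
    dot x (A1gen n (Fin.castAdd n k)) = x (Fin.castAdd n k) + x (Fin.natAdd n k) := by
  rw [dot_eq_dotProduct, A1gen, Fin.append_left, dotProduct_add, dotProduct_single_one,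
    dotProduct_single_one]

lemma dot_A1gen_natAdd {n : ℕ} (x : Fin (n + n) → ℝ) (k : Fin n) :
    dot x (A1gen n (Fin.natAdd n k)) = x (Fin.castAdd n k) - x (Fin.natAdd n k) := by
  rw [dot_eq_dotProduct, A1gen, Fin.append_right, dotProduct_sub, dotProduct_single_one,
    dotProduct_single_one]

lemma wt_append {m n : ℕ} (a : Fin m → ZMod 2) (b : Fin n → ZMod 2) :
    wt (Fin.append a b) = wt a + wt b := by
  simp only [wt, Finset.card_filter, Fin.sum_univ_add, Fin.append_left, Fin.append_right]

lemma natCast_wt {m : ℕ} (a : Fin m → ZMod 2) : (wt a : ZMod 2) = ∑ i, a i := by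
  rw [wt, Finset.card_filter, Nat.cast_sum]
  refine Finset.sum_congr rfl fun i _ => ?_
  generalize a i = z
  revert z; decide

lemma wt_append_self_mod_four {n : ℕ} (p : Fin n → ZMod 2) :
    wt (Fin.append p p) % 4 = 0 ↔ ∑ i, p i = 0 := by
  rw [wt_append, ← natCast_wt, ZMod.natCast_eq_zero_iff_even, even_iff_two_dvd]
  omega

lemma mem_Dcode_iff {n : ℕ} (d : Fin (n + n) → ZMod 2) :
    d ∈ Dcode n ↔ ∃ p : Fin n → ZMod 2, d = Fin.append p p ∧ ∑ i, p i = 0 := by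
  constructor
  · rintro ⟨hdup, hwt⟩
    have hd : d = Fin.append (d ∘ Fin.castAdd n) (d ∘ Fin.castAdd n) := by
      conv_lhs => rw [← Fin.append_castAdd_natAdd (f := d)]
      simp only [← hdup]; rfl
    exact ⟨_, hd, (wt_append_self_mod_four _).1 (hd ▸ hwt)⟩
  · rintro ⟨p, rfl, hp⟩
    exact ⟨fun k => by rw [Fin.append_left, Fin.append_right], (wt_append_self_mod_four p).2 hp⟩

lemma mem_Dset_iff {m : ℕ} (y : Fin m → ℝ) :
    y ∈ Dset m ↔ ∃ Y : Fin m → ℤ, y = (fun i => (Y i : ℝ)) ∧ Even (∑ i, Y i) := by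
  constructor
  · rintro ⟨hint, k, hk⟩
    choose Y hY using hint
    refine ⟨Y, funext hY, k, ?_⟩
    have : ((∑ i, Y i : ℤ) : ℝ) = ((k + k : ℤ) : ℝ) := by push_cast [← hY, hk]; ring
    exact_mod_cast this
  · rintro ⟨Y, rfl, k, hk⟩
    refine ⟨fun i => ⟨Y i, rfl⟩, k, ?_⟩
    rw [← Int.cast_sum, hk]
    push_cast; ring

def HasA1Syndrome {n : ℕ} (x : Fin (n + n) → ℝ) (c : Fin (n + n) → ZMod 2) : Prop :=
  ∀ j, ∃ m : ℤ, dot x (A1gen n j) = m ∧ (m : ZMod 2) = c j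

namespace HasA1Syndrome

variable {n : ℕ} {x y : Fin (n + n) → ℝ} {c d : Fin (n + n) → ZMod 2}

lemma add (hx : HasA1Syndrome x c) (hy : HasA1Syndrome y d) : HasA1Syndrome (x + y) (c + d) :=
  fun j => by
    obtain ⟨m, hm, hmc⟩ := hx j
    obtain ⟨m', hm', hmd⟩ := hy j
    refine ⟨m + m', ?_, by push_cast [hmc, hmd]; rfl⟩
    rw [dot_eq_dotProduct, add_dotProduct]
    push_cast [← hm, ← hm']
    rfl

lemma sub (hx : HasA1Syndrome x c) (hy : HasA1Syndrome y d) : HasA1Syndrome (x - y) (c - d) :=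
  fun j => by
    obtain ⟨m, hm, hmc⟩ := hx j
    obtain ⟨m', hm', hmd⟩ := hy j
    refine ⟨m - m', ?_, by push_cast [hmc, hmd]; rfl⟩
    rw [dot_eq_dotProduct, sub_dotProduct]
    push_cast [← hm, ← hm']
    rfl

lemma unique (hc : HasA1Syndrome x c) (hd : HasA1Syndrome x d) : c = d :=
  funext fun j => by
    obtain ⟨m, hm, hmc⟩ := hc j
    obtain ⟨m', hm', hmd⟩ := hd j
    rw [← hmc, ← hmd, Int.cast_injective (hm.symm.trans hm')]

end HasA1Syndrome

lemma hasA1Syndrome_iff {n : ℕ} (x : Fin (n + n) → ℝ) (c : Fin (n + n) → ZMod 2) :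
    HasA1Syndrome x c ↔ ∀ k : Fin n,
      (∃ m : ℤ, x (Fin.castAdd n k) + x (Fin.natAdd n k) = m ∧
        (m : ZMod 2) = c (Fin.castAdd n k)) ∧
      (∃ m : ℤ, x (Fin.castAdd n k) - x (Fin.natAdd n k) = m ∧
        (m : ZMod 2) = c (Fin.natAdd n k)) := by
  simp only [HasA1Syndrome, Fin.forall_fin_add, dot_A1gen_castAdd, dot_A1gen_natAdd, forall_and]

lemma hasA1Syndrome_intCast {n : ℕ} (Y : Fin (n + n) → ℤ) :
    HasA1Syndrome (fun j => (Y j : ℝ))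
      (Fin.append (fun k => ((Y (Fin.castAdd n k) + Y (Fin.natAdd n k) : ℤ) : ZMod 2))
        (fun k => ((Y (Fin.castAdd n k) + Y (Fin.natAdd n k) : ℤ) : ZMod 2))) := by
  refine (hasA1Syndrome_iff _ _).2 fun k =>
    ⟨⟨Y (Fin.castAdd n k) + Y (Fin.natAdd n k), by push_cast; rfl, by rw [Fin.append_left]⟩,
      ⟨Y (Fin.castAdd n k) - Y (Fin.natAdd n k), by push_cast; rfl, ?_⟩⟩
  rw [Fin.append_right]
  push_cast
  exact CharTwo.sub_eq_add _ _

lemma hasA1Syndrome_glue {n : ℕ} (i : Fin 4) : HasA1Syndrome (glue (n + n) i) (glueCode n i) := by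
  refine (hasA1Syndrome_iff _ _).2 fun k => ?_
  have hk := k.isLt
  have hpos : 0 < n := by omega
  have hfirst : ¬((k : ℕ) = n + n - 1) ∧ n - 1 ≠ n + n - 1 := by omega
  have hsecond : ¬((k : ℕ) + n < n) ∧ ¬((k : ℕ) + n = n - 1) ∧ ¬(n + n - 1 < n) := by omega
  have hlast : ((k : ℕ) + n = n + n - 1 ↔ (k : ℕ) = n - 1) ∧ n - 1 + n = n + n - 1 := by omega
  fin_cases i <;> by_cases h : (k : ℕ) = n - 1 <;>
    norm_num [glue, glueCode, h, hk, hpos, hfirst, hsecond, hlast] <;>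
    simp only [← Int.cast_zero (R := ℝ), ← Int.cast_one (R := ℝ), ← Int.cast_neg, Int.cast_inj,
      exists_eq_left'] <;>
    decide

lemma exists_mem_Dset_hasA1Syndrome_iff {n : ℕ} (d : Fin (n + n) → ZMod 2) :
    (∃ y ∈ Dset (n + n), HasA1Syndrome y d) ↔ d ∈ Dcode n := by
  rw [mem_Dcode_iff]
  constructor
  · rintro ⟨y, hy, hyd⟩
    obtain ⟨Y, rfl, hY⟩ := (mem_Dset_iff y).1 hy
    refine ⟨_, hyd.unique (hasA1Syndrome_intCast Y), ?_⟩
    rw [← ZMod.intCast_eq_zero_iff_even, Int.cast_sum, Fin.sum_univ_add] at hY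
    push_cast
    rwa [Finset.sum_add_distrib]
  · rintro ⟨p, rfl, hp⟩
    let Y : Fin (n + n) → ℤ := Fin.append (fun k => ((p k).val : ℤ)) 0
    refine ⟨_, (mem_Dset_iff _).2 ⟨Y, rfl, ?_⟩, ?_⟩
    · rw [← ZMod.intCast_eq_zero_iff_even, Int.cast_sum, Fin.sum_univ_add]
      simpa only [Y, Fin.append_left, Fin.append_right, Pi.zero_apply, Int.cast_zero,
        Finset.sum_const_zero, add_zero, Int.cast_natCast, ZMod.natCast_zmod_val] using hp
    · convert hasA1Syndrome_intCast Y using 2 <;>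
        simp only [Y, Fin.append_left, Fin.append_right, Pi.zero_apply, add_zero,
          Int.cast_natCast, ZMod.natCast_zmod_val]

theorem stmt_8_general (n : ℕ) (i : Fin 4) :
    {c : Fin (n + n) → ZMod 2 | ∃ x : Fin (n + n) → ℝ,
        x - glue (n + n) i ∈ Dset (n + n) ∧
        ∀ j, ∃ m : ℤ, dot x (A1gen n j) = (m : ℝ) ∧ (m : ZMod 2) = c j}
    = {c | ∃ d ∈ Dcode n, c = d + glueCode n i} := by
  ext c
  constructor
  · rintro ⟨x, hxD, hx⟩
    have hsyn : HasA1Syndrome (x - glue (n + n) i) (c - glueCode n i) :=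
      HasA1Syndrome.sub hx (hasA1Syndrome_glue i)
    exact ⟨_, (exists_mem_Dset_hasA1Syndrome_iff _).1 ⟨_, hxD, hsyn⟩, (sub_add_cancel _ _).symm⟩
  · rintro ⟨d, hd, rfl⟩
    obtain ⟨y, hy, hyd⟩ := (exists_mem_Dset_hasA1Syndrome_iff d).2 hd
    exact ⟨y + glue (n + n) i, by rwa [add_sub_cancel_right], hyd.add (hasA1Syndrome_glue i)⟩

/-- under the identification of the discriminant group of `A_1^{2n}` with
`𝔽_2^{2n}` given by `x ↦ (x · v_j mod 2)` for the generators `v_j`, the image of the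
coset `D_{2n} + [i]` equals the coset of codewords `𝒟_{2n} + [i]`, for `i ∈ {0,1,2,3}`. -/
theorem stmt_8 (n : ℕ) (hn : 0 < n) (i : Fin 4) :
    {c : Fin (n + n) → ZMod 2 | ∃ x : Fin (n + n) → ℝ,
        x - glue (n + n) i ∈ Dset (n + n) ∧
        ∀ j, ∃ m : ℤ, dot x (A1gen n j) = (m : ℝ) ∧ (m : ZMod 2) = c j}
    = {c | ∃ d ∈ Dcode n, c = d + glueCode n i} :=
  stmt_8_general n i
end

section
/- Let 𝒢 ⊂ 𝔽_3^{12} be a copy of the extended ternary Golay code containing the all-ones word. Then there are exactly 11 codewords C ∈ 𝒢 whose first entry equals +1, having exactly six entries equal to +1 and six entries equal to -1. -/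
def wt3 (C : Fin 12 → ZMod 3) : ℕ :=
  (Finset.univ.filter fun i => C i ≠ 0).card

/-!
Every weight is `≡ C · C ≡ 0 (mod 3)`, so lies in `{0, 6, 9, 12}`. Being self-orthogonal of
dimension half its length, `𝒢` is self-dual, so any two coordinates are independent on `𝒢`
(a dependency would put a word of weight 2 in `𝒢^⊥ = 𝒢`); with `𝟏 ∈ 𝒢` every coordinate is nonzero
on 2/3 and every pair on 4/9 of the 729 codewords. This gives the power moments
`∑ wt = 5832` and `∑ wt² = 48600`, which force exactly 24 words of full weight; negation pairs them
up, so 12 of them start with `+1`. For such a word `C ≠ 𝟏`, the codewords `C + 𝟏` and `C - 𝟏` have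
weights `#{C = 1}` and `#{C = -1}`, both at least 6 and summing to 12.
-/

open Finset Module Matrix

section FiberCount

variable {A W F : Type*} [AddGroup A] [AddMonoid W] [Fintype A] [Fintype W] [DecidableEq W]
  [FunLike F A W] [AddMonoidHomClass F A W]

lemma card_filter_comp_mul_card_of_surjective (f : F) (hf : Function.Surjective f)
    (P : W → Prop) [DecidablePred P] :
    #{a | P (f a)} * Fintype.card W = #{w | P w} * Fintype.card A := by
  have hfiber : ∀ w, #{a | f a = w} = #{a | f a = 0} := fun w =>
    AddMonoidHom.card_fiber_eq_of_mem_range f (hf w) (hf 0)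
  have hP : #{a | P (f a)} = ∑ w ∈ {w | P w}, #{a | f a = w} := by
    simp [sum_card_fiberwise_eq_card_filter]
  have hA : Fintype.card A = ∑ w, #{a | f a = w} := by
    simp [sum_card_fiberwise_eq_card_filter]
  simp only [hP, hA, hfiber, sum_const, card_univ, smul_eq_mul]
  ring

end FiberCount

section Weights

variable {α ι β : Type*} [Fintype ι] [DecidableEq β]

lemma sum_hammingNorm_eq_sum_card_filter [Zero β] (s : Finset α) (x : α → ι → β) :
    ∑ a ∈ s, hammingNorm (x a) = ∑ i, #{a ∈ s | x a i ≠ 0} := by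
  simp only [hammingNorm, card_filter]
  exact sum_comm

lemma sum_hammingNorm_sq_eq_sum_card_filter [Zero β] (s : Finset α) (x : α → ι → β) :
    ∑ a ∈ s, hammingNorm (x a) ^ 2 = ∑ i, ∑ j, #{a ∈ s | x a i ≠ 0 ∧ x a j ≠ 0} := by
  simp only [hammingNorm, card_filter, sq, sum_mul_sum, ite_zero_mul_ite_zero, mul_one]
  rw [sum_comm]
  exact sum_congr rfl fun i _ => sum_comm

lemma hammingNorm_eq_card_iff [Zero β] {x : ι → β} :
    hammingNorm x = Fintype.card ι ↔ ∀ i, x i ≠ 0 := by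
  simp [hammingNorm, ← card_univ, card_filter_eq_iff]

lemma hammingNorm_neg [AddGroup β] (x : ι → β) : hammingNorm (-x) = hammingNorm x :=
  hammingNorm_comp (fun _ => Neg.neg) (fun _ => neg_injective) (fun _ => neg_zero)

end Weights

section SelfDual

variable {K : Type*} [Field K] {n : ℕ} {G : Submodule K (Fin n → K)}

lemma Submodule.mem_of_forall_dotProduct_eq_zero (hdim : n ≤ 2 * finrank K G)
    (horth : ∀ C ∈ G, ∀ D ∈ G, C ⬝ᵥ D = 0) {D : Fin n → K} (hD : ∀ C ∈ G, C ⬝ᵥ D = 0) :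
    D ∈ G := by
  set B : LinearMap.BilinForm K (Fin n → K) := Matrix.toBilin' 1
  have hB : ∀ x y, B x y = x ⬝ᵥ y := fun x y => by
    simp [B, Matrix.toBilin'_apply', dotProduct]
  have hnd : B.Nondegenerate :=
    Matrix.Nondegenerate.toBilin' (Matrix.nondegenerate_iff_det_ne_zero.2 (by simp))
  have hle : G ≤ B.orthogonal G := fun x hx =>
    (LinearMap.BilinForm.mem_orthogonal_iff).2 fun y hy => (hB y x).trans (horth y hy x hx)
  have hG : G = B.orthogonal G := Submodule.eq_of_le_of_finrank_le hle (by
    rw [LinearMap.BilinForm.finrank_orthogonal hnd G, finrank_fin_fun]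
    omega)
  rw [hG, LinearMap.BilinForm.mem_orthogonal_iff]
  exact fun C hC => (hB C D).trans (hD C hC)

variable [DecidableEq K]

/-- Otherwise `eᵢ - eⱼ`, of weight 2, lies in the dual code, which is `G`. -/
lemma exists_apply_ne_apply (hdual : ∀ D, (∀ C ∈ G, C ⬝ᵥ D = 0) → D ∈ G)
    (hmin : ∀ C ∈ G, C ≠ 0 → 3 ≤ hammingNorm C) {i j : Fin n} (hij : i ≠ j) :
    ∃ C ∈ G, C i ≠ C j := by
  by_contra! h
  set D : Fin n → K := Pi.single i 1 - Pi.single j 1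
  have hDG : D ∈ G := hdual D fun C hC => by
    simp [D, dotProduct_sub, h C hC]
  have hD0 : D ≠ 0 := fun h0 => by simpa [D, hij] using congrFun h0 i
  have hsupp : hammingNorm D ≤ 2 := by
    refine (card_le_card fun k hk => ?_).trans (card_le_two : #{i, j} ≤ 2)
    by_contra hk'
    simp only [mem_insert, mem_singleton, not_or] at hk'
    simp [D, hk'.1, hk'.2] at hk
  have := hmin D hDG hD0
  omega

variable [Fintype K] [Fintype G]

lemma card_filter_apply_ne_zero_mul_card (hones : 1 ∈ G) (i : Fin n) :
    #{C : G | (C : Fin n → K) i ≠ 0} * Fintype.card K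
      = (Fintype.card K - 1) * Fintype.card G := by
  have hsurj : Function.Surjective (LinearMap.proj i ∘ₗ G.subtype) := fun t =>
    ⟨t • ⟨1, hones⟩, by simp⟩
  have hK : #{x : K | x ≠ 0} = Fintype.card K - 1 := by
    rw [filter_ne', card_erase_of_mem (mem_univ _), card_univ]
  rw [← hK]
  exact card_filter_comp_mul_card_of_surjective _ hsurj (· ≠ 0)

lemma card_filter_apply_ne_zero_and_apply_ne_zero_mul_card (hones : 1 ∈ G) {C₀ : Fin n → K}
    (hC₀ : C₀ ∈ G) {i j : Fin n} (hij : C₀ i ≠ C₀ j) :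
    #{C : G | (C : Fin n → K) i ≠ 0 ∧ (C : Fin n → K) j ≠ 0} * Fintype.card K ^ 2
      = (Fintype.card K - 1) ^ 2 * Fintype.card G := by
  set f : G →ₗ[K] K × K := (LinearMap.proj i ∘ₗ G.subtype).prod (LinearMap.proj j ∘ₗ G.subtype)
  have hsurj : Function.Surjective f := by
    rintro ⟨x, y⟩
    have hne : C₀ i - C₀ j ≠ 0 := sub_ne_zero.2 hij
    set β := (x - y) / (C₀ i - C₀ j)
    refine ⟨(x - β * C₀ i) • ⟨1, hones⟩ + β • ⟨C₀, hC₀⟩, Prod.ext ?_ ?_⟩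
    · simp [f]
    · simp only [f, β, LinearMap.prod_apply, LinearMap.coe_comp, LinearMap.coe_proj,
        Submodule.coe_subtype, Function.prod_apply, Function.comp_apply, Function.eval,
        SetLike.mk_smul_mk, AddMemClass.mk_add_mk, Pi.add_apply, Pi.smul_apply, Pi.one_apply,
        smul_eq_mul, mul_one]
      field_simp
      ring
  have hK : #{p : K × K | p.1 ≠ 0 ∧ p.2 ≠ 0} = (Fintype.card K - 1) ^ 2 := by
    rw [← univ_product_univ, filter_product (· ≠ 0) (· ≠ 0), card_product, filter_ne',
      card_erase_of_mem (mem_univ _), card_univ, sq]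
  rw [← hK, sq, ← Fintype.card_prod]
  exact card_filter_comp_mul_card_of_surjective f hsurj fun p => p.1 ≠ 0 ∧ p.2 ≠ 0

end SelfDual

section Ternary

variable {ι : Type*} [Fintype ι]

lemma hammingNorm_cast_eq_dotProduct_self (x : ι → ZMod 3) : (hammingNorm x : ZMod 3) = x ⬝ᵥ x := by
  have hsq : ∀ a : ZMod 3, ((if a ≠ 0 then 1 else 0 : ℕ) : ZMod 3) = a * a := by decide
  simp only [hammingNorm, card_filter, Nat.cast_sum, dotProduct, hsq]

lemma hammingNorm_eq_card_add_card [DecidableEq ι] (x : ι → ZMod 3) :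
    hammingNorm x = #{i | x i = 1} + #{i | x i = -1} := by
  have h : ∀ a : ZMod 3, a ≠ 0 ↔ a = 1 ∨ a = -1 := by decide
  have hdisj : Disjoint (univ.filter fun i => x i = 1) (univ.filter fun i => x i = -1) :=
    disjoint_filter.2 fun i _ h1 h2 => absurd (h1.symm.trans h2) (by decide)
  rw [← card_union_of_disjoint hdisj, ← filter_or]
  simp only [hammingNorm, h]

lemma hammingNorm_add_one_of_forall_ne_zero {x : ι → ZMod 3} (hx : ∀ i, x i ≠ 0) :
    hammingNorm (x + 1) = #{i | x i = 1} := by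
  have h : ∀ a : ZMod 3, a ≠ 0 → (a + 1 ≠ 0 ↔ a = 1) := by decide
  exact congrArg card (filter_congr fun i _ => h _ (hx i))

lemma hammingNorm_sub_one_of_forall_ne_zero {x : ι → ZMod 3} (hx : ∀ i, x i ≠ 0) :
    hammingNorm (x - 1) = #{i | x i = -1} := by
  have h : ∀ a : ZMod 3, a ≠ 0 → (a - 1 ≠ 0 ↔ a = -1) := by decide
  exact congrArg card (filter_congr fun i _ => h _ (hx i))

lemma two_mul_card_filter_apply_eq_one {G : Submodule (ZMod 3) (ι → ZMod 3)} [Fintype G] (i : ι) :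
    2 * #{C : G | hammingNorm (C : ι → ZMod 3) = Fintype.card ι ∧ (C : ι → ZMod 3) i = 1}
      = #{C : G | hammingNorm (C : ι → ZMod 3) = Fintype.card ι} := by
  have hneg : ∀ a : ZMod 3, a ≠ 0 → (a = 1 ↔ ¬-a = 1) := by decide
  have hswap : #{C : G | hammingNorm (C : ι → ZMod 3) = Fintype.card ι ∧ (C : ι → ZMod 3) i = 1}
      = #{C : G | hammingNorm (C : ι → ZMod 3) = Fintype.card ι ∧ ¬(C : ι → ZMod 3) i = 1} :=
    card_equiv (Equiv.neg G) fun C => by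
      simp only [mem_filter, mem_univ, true_and, Equiv.neg_apply, Submodule.coe_neg,
        hammingNorm_neg, Pi.neg_apply]
      exact and_congr_right fun hC => hneg _ (hammingNorm_eq_card_iff.1 hC i)
  have hsplit := card_filter_add_card_filter_not
    (s := {C : G | hammingNorm (C : ι → ZMod 3) = Fintype.card ι}) fun C => (C : ι → ZMod 3) i = 1
  simp only [filter_filter] at hsplit
  omega

end Ternary

namespace TernaryGolay

variable {G : Submodule (ZMod 3) (Fin 12 → ZMod 3)}

lemma hammingNorm_mem (horth : ∀ C ∈ G, ∀ D ∈ G, C ⬝ᵥ D = 0)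
    (hmin : ∀ C ∈ G, C ≠ 0 → 6 ≤ hammingNorm C) {C : Fin 12 → ZMod 3} (hC : C ∈ G) :
    hammingNorm C ∈ ({0, 6, 9, 12} : Finset ℕ) := by
  have h3 : 3 ∣ hammingNorm C := (ZMod.natCast_eq_zero_iff _ _).1
    ((hammingNorm_cast_eq_dotProduct_self C).trans (horth C hC C hC))
  have h12 : hammingNorm C ≤ 12 := by simpa using hammingNorm_le_card_fintype (x := C)
  rcases eq_or_ne C 0 with rfl | hC0
  · simp
  · have h6 := hmin C hC hC0
    simp only [mem_insert, mem_singleton]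
    omega

lemma card_eq_six_and_card_eq_six_iff (hmin : ∀ C ∈ G, C ≠ 0 → 6 ≤ hammingNorm C)
    (hones : 1 ∈ G) {C : Fin 12 → ZMod 3} (hC : C ∈ G) (hC0 : C 0 = 1) :
    #{i | C i = 1} = 6 ∧ #{i | C i = -1} = 6 ↔ hammingNorm C = 12 ∧ C ≠ 1 := by
  have hsplit := hammingNorm_eq_card_add_card C
  constructor
  · rintro ⟨h1, h2⟩
    refine ⟨by omega, ?_⟩
    rintro rfl
    simp [show (1 : ZMod 3) ≠ -1 by decide] at h2
  · rintro ⟨hw, hne⟩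
    have hfull : ∀ i, C i ≠ 0 := hammingNorm_eq_card_iff.1 (by simpa using hw)
    have ha := hmin (C + 1) (add_mem hC hones) fun h => by
      have h0 := congrFun h 0
      simp only [Pi.add_apply, hC0, Pi.one_apply, Pi.zero_apply] at h0
      exact absurd h0 (by decide)
    have hb := hmin (C - 1) (sub_mem hC hones) (sub_ne_zero.2 hne)
    rw [hammingNorm_add_one_of_forall_ne_zero hfull] at ha
    rw [hammingNorm_sub_one_of_forall_ne_zero hfull] at hb
    omega

variable [Fintype G]

lemma card_eq (hdim : finrank (ZMod 3) G = 6) : Fintype.card G = 729 := by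
  rw [card_eq_pow_finrank (K := ZMod 3), hdim, ZMod.card]
  rfl

lemma sum_hammingNorm (hdim : finrank (ZMod 3) G = 6) (hones : 1 ∈ G) :
    ∑ C : G, hammingNorm (C : Fin 12 → ZMod 3) = 5832 := by
  have hN : ∀ i, #{C : G | (C : Fin 12 → ZMod 3) i ≠ 0} = 486 := fun i => by
    have := card_filter_apply_ne_zero_mul_card hones i
    rw [card_eq hdim, ZMod.card] at this
    omega
  simp [sum_hammingNorm_eq_sum_card_filter, hN]

lemma sum_hammingNorm_sq (hdim : finrank (ZMod 3) G = 6)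
    (horth : ∀ C ∈ G, ∀ D ∈ G, C ⬝ᵥ D = 0) (hmin : ∀ C ∈ G, C ≠ 0 → 6 ≤ hammingNorm C)
    (hones : 1 ∈ G) :
    ∑ C : G, hammingNorm (C : Fin 12 → ZMod 3) ^ 2 = 48600 := by
  have hdual : ∀ D, (∀ C ∈ G, C ⬝ᵥ D = 0) → D ∈ G := fun _ =>
    Submodule.mem_of_forall_dotProduct_eq_zero (by omega) horth
  have hN : ∀ i j, #{C : G | (C : Fin 12 → ZMod 3) i ≠ 0 ∧ (C : Fin 12 → ZMod 3) j ≠ 0}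
      = if i = j then 486 else 324 := fun i j => by
    split_ifs with hij
    · subst hij
      have := card_filter_apply_ne_zero_mul_card hones i
      rw [card_eq hdim, ZMod.card] at this
      simp only [and_self]
      omega
    · obtain ⟨C₀, hC₀, hne⟩ := exists_apply_ne_apply hdual
        (fun C hC h0 => (by omega : 3 ≤ 6).trans (hmin C hC h0)) hij
      have := card_filter_apply_ne_zero_and_apply_ne_zero_mul_card hones hC₀ hne
      rw [card_eq hdim, ZMod.card] at this
      omega
  rw [sum_hammingNorm_sq_eq_sum_card_filter]
  simp only [hN]
  decide

lemma sum_comp_hammingNorm (horth : ∀ C ∈ G, ∀ D ∈ G, C ⬝ᵥ D = 0)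
    (hmin : ∀ C ∈ G, C ≠ 0 → 6 ≤ hammingNorm C) (f : ℕ → ℕ) :
    ∑ C : G, f (hammingNorm (C : Fin 12 → ZMod 3))
      = #{C : G | hammingNorm (C : Fin 12 → ZMod 3) = 0} * f 0
        + #{C : G | hammingNorm (C : Fin 12 → ZMod 3) = 6} * f 6
        + #{C : G | hammingNorm (C : Fin 12 → ZMod 3) = 9} * f 9
        + #{C : G | hammingNorm (C : Fin 12 → ZMod 3) = 12} * f 12 := by
  rw [← sum_fiberwise_of_maps_to' (fun C _ => hammingNorm_mem horth hmin C.2)]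
  simp [add_assoc]

lemma card_hammingNorm_eq_twelve (hdim : finrank (ZMod 3) G = 6)
    (horth : ∀ C ∈ G, ∀ D ∈ G, C ⬝ᵥ D = 0) (hmin : ∀ C ∈ G, C ≠ 0 → 6 ≤ hammingNorm C)
    (hones : 1 ∈ G) :
    #{C : G | hammingNorm (C : Fin 12 → ZMod 3) = 12} = 24 := by
  have h0 : #{C : G | hammingNorm (C : Fin 12 → ZMod 3) = 0} = 1 := by
    rw [card_eq_one]
    exact ⟨0, by ext C; simp⟩
  have hcard := sum_comp_hammingNorm horth hmin fun _ => 1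
  have hsum := sum_comp_hammingNorm horth hmin fun w => w
  have hsq := sum_comp_hammingNorm horth hmin fun w => w ^ 2
  rw [sum_const, card_univ, card_eq hdim, smul_eq_mul] at hcard
  rw [sum_hammingNorm hdim hones] at hsum
  rw [sum_hammingNorm_sq hdim horth hmin hones] at hsq
  omega

lemma setOf_eq_image_erase_one (hmin : ∀ C ∈ G, C ≠ 0 → 6 ≤ hammingNorm C) (hones : 1 ∈ G) :
    {C : Fin 12 → ZMod 3 | C ∈ G ∧ C 0 = 1 ∧ #{i | C i = 1} = 6 ∧ #{i | C i = -1} = 6}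
      = Subtype.val '' ((({C : G | hammingNorm (C : Fin 12 → ZMod 3) = 12 ∧
          (C : Fin 12 → ZMod 3) 0 = 1} : Finset G).erase ⟨1, hones⟩ : Finset G) : Set G) := by
  ext C
  simp only [Set.mem_ofPred_eq, coe_erase, coe_filter, mem_univ, true_and, Set.mem_image,
    Set.mem_sdiff, Set.mem_singleton_iff, Subtype.exists, Subtype.mk.injEq, exists_and_left,
    exists_prop, exists_eq_right_right]
  constructor
  · rintro ⟨hC, hC0, hbal⟩
    obtain ⟨hw, hne⟩ := (card_eq_six_and_card_eq_six_iff hmin hones hC hC0).1 hbal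
    exact ⟨⟨⟨hw, hC0⟩, hne⟩, hC⟩
  · rintro ⟨⟨⟨hw, hC0⟩, hne⟩, hC⟩
    exact ⟨hC, hC0, (card_eq_six_and_card_eq_six_iff hmin hones hC hC0).2 ⟨hw, hne⟩⟩

end TernaryGolay

open TernaryGolay in
/-- if `𝒢 ⊂ 𝔽_3^{12}` is a copy of the extended ternary Golay code
(6-dimensional, self-orthogonal, minimum weight 6) containing the all-ones word,
then there are exactly 11 codewords whose first entry is `+1`, having exactly six
entries equal to `+1` and six entries equal to `-1`. -/
theorem stmt_9 (G : Submodule (ZMod 3) (Fin 12 → ZMod 3))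
    (hdim : Module.finrank (ZMod 3) G = 6)
    (horth : ∀ C ∈ G, ∀ D ∈ G, (∑ i, C i * D i) = 0)
    (hmin : ∀ C ∈ G, C ≠ 0 → 6 ≤ wt3 C)
    (hones : (fun _ => (1 : ZMod 3)) ∈ G) :
    {C : Fin 12 → ZMod 3 | C ∈ G ∧ C 0 = 1 ∧
      (Finset.univ.filter fun i => C i = 1).card = 6 ∧
      (Finset.univ.filter fun i => C i = -1).card = 6}.ncard = 11 := by
  classical
  have horth' : ∀ C ∈ G, ∀ D ∈ G, C ⬝ᵥ D = 0 := horth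
  have hmin' : ∀ C ∈ G, C ≠ 0 → 6 ≤ hammingNorm C := hmin
  have hones' : 1 ∈ G := hones
  have hhalf := two_mul_card_filter_apply_eq_one (G := G) 0
  rw [Fintype.card_fin, card_hammingNorm_eq_twelve hdim horth' hmin' hones'] at hhalf
  have hmem : (⟨1, hones'⟩ : G) ∈ ({C : G | hammingNorm (C : Fin 12 → ZMod 3) = 12 ∧
      (C : Fin 12 → ZMod 3) 0 = 1} : Finset G) := mem_filter.2
      ⟨mem_univ _, (by decide : hammingNorm (1 : Fin 12 → ZMod 3) = 12), rfl⟩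
  rw [setOf_eq_image_erase_one hmin' hones', Set.ncard_image_of_injective _ Subtype.val_injective,
    Set.ncard_coe_finset, card_erase_of_mem hmem]
  omega
end
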